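/- Suppose the sequence g^t = (β^t, z^t, u^t), with z^t ∈ Z_r for all t, satisfies the PPA variational inequality with a symmetric positive definite matrix H, and assume a saddle point g* exists. Then Σ_{t=0}^{∞} ‖g^{t+1} − g^t‖_H² ≤ ‖g^0 − g*‖_H²; consequently ‖g^t − g^{t+1}‖_H → 0 as t → ∞ and the sequence {g^t} is bounded. -/

import Mathlib

open Matrix Filter

noncomputable section

/-- Vectors in ℝ^p. -/
abbrev Vec (p : ℕ) := Fin p → ℝ

/-- Triples `g = (β, z, u) ∈ ℝ^p × ℝ^p × ℝ^p`. -/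
abbrev Trip (p : ℕ) := Vec p × Vec p × Vec p

/-- Index type for ℝ^{3p}. -/
abbrev Idx3 (p : ℕ) := Fin p ⊕ Fin p ⊕ Fin p

/-- Identify a triple `(β, z, u)` with a vector in ℝ^{3p}. -/
def toSum {p : ℕ} (g : Trip p) : Idx3 p → ℝ := Sum.elim g.1 (Sum.elim g.2.1 g.2.2)

/-- The operator `F(β, z, u) = (−Aᵀu, u, Aβ − z − c)`. -/
def Fop {p : ℕ} (A : Matrix (Fin p) (Fin p) ℝ) (c : Vec p) (g : Trip p) : Trip p :=
  (-(Aᵀ *ᵥ g.2.2), g.2.2, A *ᵥ g.1 - g.2.1 - c)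

/-- Membership in the box `Z_r = {z : ‖z‖_∞ ≤ r}`. -/
def inZ {p : ℕ} (r : ℝ) (z : Vec p) : Prop := ∀ j, |z j| ≤ r

/-- The ℓ₁ norm on ℝ^p. -/
def l1 {p : ℕ} (β : Vec p) : ℝ := ∑ j, |β j|

/-- The Euclidean inner product on ℝ^{3p}. -/
def ip {p : ℕ} (v w : Trip p) : ℝ := toSum v ⬝ᵥ toSum w

/-- The bilinear form `⟨v, H w⟩` on ℝ^{3p}; in particular `ipH H v v = ‖v‖_H²`. -/
def ipH {p : ℕ} (H : Matrix (Idx3 p) (Idx3 p) ℝ) (v w : Trip p) : ℝ :=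
  toSum v ⬝ᵥ (H *ᵥ toSum w)

/-- `g* = (β*, z*, u*)` is a saddle point: `z* ∈ Z_r` and
`‖β‖₁ − ‖β*‖₁ + ⟨g − g*, F(g*)⟩ ≥ 0` for all `g = (β, z, u)` with `z ∈ Z_r`. -/
def IsSaddle {p : ℕ} (A : Matrix (Fin p) (Fin p) ℝ) (c : Vec p) (r : ℝ)
    (gs : Trip p) : Prop :=
  inZ r gs.2.1 ∧ ∀ g : Trip p, inZ r g.2.1 →
    0 ≤ l1 g.1 - l1 gs.1 + ip (g - gs) (Fop A c gs)

/-- The sequence `g^t` satisfies the PPA variational inequality with matrix `H`: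
for every `t` and every `g = (β, z, u)` with `z ∈ Z_r`,
`‖β‖₁ − ‖β^{t+1}‖₁ + ⟨g − g^{t+1}, F(g^{t+1})⟩ ≥ ⟨g − g^{t+1}, H(g^t − g^{t+1})⟩`. -/
def SatisfiesPVI {p : ℕ} (A : Matrix (Fin p) (Fin p) ℝ) (c : Vec p) (r : ℝ)
    (H : Matrix (Idx3 p) (Idx3 p) ℝ) (g : ℕ → Trip p) : Prop :=
  ∀ t : ℕ, ∀ gg : Trip p, inZ r gg.2.1 →
    ipH H (gg - g (t + 1)) (g t - g (t + 1)) ≤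
      l1 gg.1 - l1 (g (t + 1)).1 + ip (gg - g (t + 1)) (Fop A c (g (t + 1)))

/-!
Test the PPA inequality at `g*` and the saddle inequality at `g^{t+1}` and add them: the
`F`-terms cancel because `F` is affine with a skew-symmetric linear part, leaving
`⟨g* − g^{t+1}, H(g^t − g^{t+1})⟩ ≤ 0`. Expanding `‖g^t − g*‖_H²` around `g^{t+1}` then gives
`‖g^{t+1} − g*‖_H² + ‖g^t − g^{t+1}‖_H² ≤ ‖g^t − g*‖_H²`, which telescopes to the bound on the
series. Since `‖·‖_H` dominates a multiple of any norm (compactness of the unit sphere), the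
decreasing `‖g^t − g*‖_H` keeps the sequence bounded.
-/

namespace Matrix

variable {n : Type*} [Fintype n] {H : Matrix n n ℝ}

lemma IsSymm.dotProduct_mulVec_comm (hH : H.IsSymm) (x y : n → ℝ) :
    x ⬝ᵥ (H *ᵥ y) = y ⬝ᵥ (H *ᵥ x) := by
  rw [dotProduct_mulVec, ← mulVec_transpose, hH.eq, dotProduct_comm]

lemma IsSymm.dotProduct_mulVec_self_eq (hH : H.IsSymm) (x y : n → ℝ) :
    x ⬝ᵥ (H *ᵥ x) = y ⬝ᵥ (H *ᵥ y) + (x - y) ⬝ᵥ (H *ᵥ (x - y)) + 2 * (y ⬝ᵥ (H *ᵥ (x - y))) := by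
  have := hH.dotProduct_mulVec_comm x y
  simp only [mulVec_sub, dotProduct_sub, sub_dotProduct]
  linarith

lemma PosDef.exists_pos_mul_sq_norm_le (hH : H.PosDef) :
    ∃ ε > 0, ∀ v : n → ℝ, ε * ‖v‖ ^ 2 ≤ v ⬝ᵥ (H *ᵥ v) := by
  cases isEmpty_or_nonempty n
  · exact ⟨1, one_pos, fun v => by simp [Subsingleton.elim v 0]⟩
  set q : (n → ℝ) → ℝ := fun v => v ⬝ᵥ (H *ᵥ v)
  have hq : Continuous q := continuous_id.dotProduct (continuous_const.matrix_mulVec continuous_id)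
  obtain ⟨w, hw, hmin⟩ := (isCompact_sphere (0 : n → ℝ) 1).exists_isMinOn
    (NormedSpace.sphere_nonempty.mpr zero_le_one) hq.continuousOn
  have hw0 : w ≠ 0 := ne_zero_of_mem_unit_sphere ⟨w, hw⟩
  refine ⟨q w, hH.dotProduct_mulVec_pos hw0, fun v => ?_⟩
  rcases eq_or_ne v 0 with rfl | hv
  · simp [q]
  have hnv : 0 < ‖v‖ := norm_pos_iff.mpr hv
  have hmem : ‖v‖⁻¹ • v ∈ Metric.sphere (0 : n → ℝ) 1 := by
    simp [norm_smul, hnv.ne']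
  have hscale : q (‖v‖⁻¹ • v) = (‖v‖ ^ 2)⁻¹ * q v := by
    simp only [q, mulVec_smul, smul_dotProduct, dotProduct_smul, smul_eq_mul]
    ring
  have hle : q w ≤ q (‖v‖⁻¹ • v) := hmin hmem
  rw [hscale, le_inv_mul_iff₀ (by positivity)] at hle
  linarith

lemma PosDef.isBounded_setOf_dotProduct_mulVec_sub_le (hH : H.PosDef) (a : n → ℝ) (C : ℝ) :
    Bornology.IsBounded {v : n → ℝ | (v - a) ⬝ᵥ (H *ᵥ (v - a)) ≤ C} := by
  obtain ⟨ε, hε, hq⟩ := hH.exists_pos_mul_sq_norm_le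
  refine (Metric.isBounded_closedBall (x := a) (r := √(C / ε))).subset fun v hv => ?_
  rw [Metric.mem_closedBall, dist_eq_norm]
  refine Real.le_sqrt_of_sq_le ?_
  rw [le_div_iff₀ hε]
  linarith [hq (v - a), hv.out]

end Matrix

lemma sum_range_add_le_of_add_le_succ {φ d : ℕ → ℝ} (h : ∀ t, φ (t + 1) + d t ≤ φ t) (n : ℕ) :
    ∑ i ∈ Finset.range n, d i + φ n ≤ φ 0 := by
  induction n with
  | zero => simp
  | succ n ih =>
    rw [Finset.sum_range_succ]
    linarith [h n]

lemma summable_and_tsum_le_of_add_le_succ {φ d : ℕ → ℝ} (hφ : ∀ t, 0 ≤ φ t) (hd : ∀ t, 0 ≤ d t)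
    (h : ∀ t, φ (t + 1) + d t ≤ φ t) : Summable d ∧ ∑' t, d t ≤ φ 0 := by
  have hle : ∀ n, ∑ i ∈ Finset.range n, d i ≤ φ 0 := fun n => by
    linarith [sum_range_add_le_of_add_le_succ h n, hφ n]
  exact ⟨summable_of_sum_range_le hd hle, Real.tsum_le_of_sum_range_le hd hle⟩

section Triples

variable {p : ℕ}

lemma toSum_sub (a b : Trip p) : toSum (a - b) = toSum a - toSum b := by
  funext i
  rcases i with i | i | i <;> rfl

lemma toSum_neg (a : Trip p) : toSum (-a) = -toSum a := by
  funext i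
  rcases i with i | i | i <;> rfl

lemma ip_eq (v w : Trip p) :
    ip v w = v.1 ⬝ᵥ w.1 + v.2.1 ⬝ᵥ w.2.1 + v.2.2 ⬝ᵥ w.2.2 := by
  simp only [ip, toSum, dotProduct, Fintype.sum_sum_type, Sum.elim_inl, Sum.elim_inr]
  ring

lemma ip_sub_Fop_eq (A : Matrix (Fin p) (Fin p) ℝ) (c : Vec p) (x y : Trip p) :
    ip (x - y) (Fop A c x) = ip (x - y) (Fop A c y) := by
  have hA : (x.1 - y.1) ⬝ᵥ (Aᵀ *ᵥ (x.2.2 - y.2.2)) = (x.2.2 - y.2.2) ⬝ᵥ (A *ᵥ (x.1 - y.1)) := by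
    rw [dotProduct_mulVec, vecMul_transpose, dotProduct_comm]
  have hzu := dotProduct_comm (x.2.1 - y.2.1) (x.2.2 - y.2.2)
  simp only [ip_eq, Fop, Prod.fst_sub, Prod.snd_sub, mulVec_sub, dotProduct_neg,
    dotProduct_sub, sub_dotProduct] at hA hzu ⊢
  linarith

lemma Matrix.IsSymm.ipH_self_eq {H : Matrix (Idx3 p) (Idx3 p) ℝ} (hH : H.IsSymm) (a b : Trip p) :
    ipH H a a = ipH H b b + ipH H (a - b) (a - b) + 2 * ipH H b (a - b) := by
  simp only [ipH, toSum_sub]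
  exact hH.dotProduct_mulVec_self_eq _ _

variable (H : Matrix (Idx3 p) (Idx3 p) ℝ)

lemma ipH_neg_left (v w : Trip p) : ipH H (-v) w = -ipH H v w := by
  simp only [ipH, toSum_neg, neg_dotProduct]

lemma ipH_sub_self_comm (a b : Trip p) : ipH H (a - b) (a - b) = ipH H (b - a) (b - a) := by
  rw [← neg_sub b a]
  simp only [ipH, toSum_neg, mulVec_neg, dotProduct_neg, neg_dotProduct, neg_neg]

end Triples

namespace SatisfiesPVI

variable {p : ℕ} {A : Matrix (Fin p) (Fin p) ℝ} {c : Vec p} {r : ℝ}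
  {H : Matrix (Idx3 p) (Idx3 p) ℝ} {g : ℕ → Trip p} {gs : Trip p}

lemma ipH_saddle_sub_nonpos (hPVI : SatisfiesPVI A c r H g) (hgs : IsSaddle A c r gs) {t : ℕ}
    (hz : inZ r (g (t + 1)).2.1) : ipH H (gs - g (t + 1)) (g t - g (t + 1)) ≤ 0 := by
  have hppa := hPVI t gs hgs.1
  have hsaddle := hgs.2 (g (t + 1)) hz
  have hF := ip_sub_Fop_eq A c (g (t + 1)) gs
  have hneg : ip (gs - g (t + 1)) (Fop A c (g (t + 1))) =
      -ip (g (t + 1) - gs) (Fop A c (g (t + 1))) := by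
    rw [← neg_sub, ip, toSum_neg, neg_dotProduct, ip]
  linarith

lemma ipH_succ_add_le (hPVI : SatisfiesPVI A c r H g) (hgs : IsSaddle A c r gs) (hH : H.IsSymm)
    {t : ℕ} (hz : inZ r (g (t + 1)).2.1) :
    ipH H (g (t + 1) - gs) (g (t + 1) - gs) + ipH H (g t - g (t + 1)) (g t - g (t + 1)) ≤
      ipH H (g t - gs) (g t - gs) := by
  have hpol := hH.ipH_self_eq (g t - gs) (g (t + 1) - gs)
  rw [sub_sub_sub_cancel_right] at hpol
  have hcross : ipH H (g (t + 1) - gs) (g t - g (t + 1)) =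
      -ipH H (gs - g (t + 1)) (g t - g (t + 1)) := by
    rw [← ipH_neg_left, neg_sub]
  linarith [hPVI.ipH_saddle_sub_nonpos hgs hz]

end SatisfiesPVI

theorem stmt10_general {p : ℕ} (A : Matrix (Fin p) (Fin p) ℝ) (c : Vec p) (r : ℝ)
    (H : Matrix (Idx3 p) (Idx3 p) ℝ) (hH : H.PosDef)
    (g : ℕ → Trip p) (hz : ∀ t, inZ r (g t).2.1)
    (hPVI : SatisfiesPVI A c r H g)
    (gs : Trip p) (hgs : IsSaddle A c r gs) :
    Summable (fun t : ℕ => ipH H (g (t + 1) - g t) (g (t + 1) - g t)) ∧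
    (∑' t : ℕ, ipH H (g (t + 1) - g t) (g (t + 1) - g t)) ≤ ipH H (g 0 - gs) (g 0 - gs) ∧
    Tendsto (fun t : ℕ => Real.sqrt (ipH H (g t - g (t + 1)) (g t - g (t + 1))))
      atTop (nhds 0) ∧
    Bornology.IsBounded (Set.range fun t : ℕ => toSum (g t)) := by
  set φ : ℕ → ℝ := fun t => ipH H (g t - gs) (g t - gs)
  set d : ℕ → ℝ := fun t => ipH H (g t - g (t + 1)) (g t - g (t + 1))
  have hnonneg (v : Trip p) : 0 ≤ ipH H v v := hH.posSemidef.dotProduct_mulVec_nonneg (toSum v)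
  have hstep (t : ℕ) : φ (t + 1) + d t ≤ φ t :=
    hPVI.ipH_succ_add_le hgs (isHermitian_iff_isSymm.mp hH.isHermitian) (hz (t + 1))
  obtain ⟨hsum, htsum⟩ :=
    summable_and_tsum_le_of_add_le_succ (φ := φ) (d := d) (fun t => hnonneg _) (fun t => hnonneg _)
      hstep
  have hswap : (fun t => ipH H (g (t + 1) - g t) (g (t + 1) - g t)) = d :=
    funext fun t => ipH_sub_self_comm H _ _
  have hφ : Antitone φ :=
    antitone_nat_of_succ_le fun t => by linarith [hstep t, hnonneg (g t - g (t + 1))]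
  refine ⟨hswap ▸ hsum, hswap ▸ htsum, by simpa using hsum.tendsto_atTop_zero.sqrt, ?_⟩
  refine (hH.isBounded_setOf_dotProduct_mulVec_sub_le (toSum gs) (φ 0)).subset ?_
  rintro _ ⟨t, rfl⟩
  change (toSum (g t) - toSum gs) ⬝ᵥ _ ≤ φ 0
  rw [← toSum_sub]
  exact hφ (Nat.zero_le t)

/-- Summability of successive differences: `Σ_{t=0}^∞ ‖g^{t+1} − g^t‖_H² ≤ ‖g^0 − g*‖_H²`;
consequently `‖g^t − g^{t+1}‖_H → 0` and the sequence `{g^t}` is bounded. -/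
theorem stmt10 {p : ℕ} (A : Matrix (Fin p) (Fin p) ℝ) (c : Vec p) (r : ℝ) (hr : 0 ≤ r)
    (H : Matrix (Idx3 p) (Idx3 p) ℝ) (hH : H.PosDef)
    (g : ℕ → Trip p) (hz : ∀ t, inZ r (g t).2.1)
    (hPVI : SatisfiesPVI A c r H g)
    (gs : Trip p) (hgs : IsSaddle A c r gs) :
    Summable (fun t : ℕ => ipH H (g (t + 1) - g t) (g (t + 1) - g t)) ∧
    (∑' t : ℕ, ipH H (g (t + 1) - g t) (g (t + 1) - g t)) ≤ ipH H (g 0 - gs) (g 0 - gs) ∧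
    Tendsto (fun t : ℕ => Real.sqrt (ipH H (g t - g (t + 1)) (g t - g (t + 1))))
      atTop (nhds 0) ∧
    Bornology.IsBounded (Set.range fun t : ℕ => toSum (g t)) :=
  stmt10_general A c r H hH g hz hPVI gs hgs
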